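/- Let n ≥ 2 and set G := g_{σ_n}g_{σ_{n−1}}⋯g_{σ_1}g_{a_{n+1}} ∈ TLhat_{n+1}(q). Then for every x ∈ TLhat_n(q), G·F_n(x)·G^{−1} = F_n(ψ_n^{−1}(x)). In particular, if x, y ∈ TLhat_n(q) satisfy ψ_n(x) = y, then F_n(x) and F_n(y) are conjugate in TLhat_{n+1}(q) by a power of G. -/
import Mathlib


namespace AffineTL

open FreeAlgebra

/-- Cyclic successor on `Fin m`. -/
def csucc {m : ℕ} (i : Fin m) : Fin m := ⟨(i.val + 1) % m, Nat.mod_lt _ i.pos⟩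

/-- The defining relations of the affine Temperley–Lieb algebra `TLhat_m(q)` with `m`
generators (indexed so that `g_{σ_i}` has index `i - 1` and `g_{a_m}` has index `m - 1`).
For `m = 1` the unique generator is set to `0`, so that `TLhat_1(q) ≅ K`. -/
inductive ATLRel {K : Type*} [CommRing K] (q : K) (m : ℕ) :
    FreeAlgebra K (Fin m) → FreeAlgebra K (Fin m) → Prop
  | degen (h : m ≤ 1) (i : Fin m) : ATLRel q m (ι K i) 0
  | quad (h : 2 ≤ m) (i : Fin m) :
      ATLRel q m (ι K i * ι K i) ((q - 1) • ι K i + algebraMap K _ q)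
  | comm (h : 3 ≤ m) (i j : Fin m) (h1 : i ≠ j) (h2 : j ≠ csucc i) (h3 : i ≠ csucc j) :
      ATLRel q m (ι K i * ι K j) (ι K j * ι K i)
  | braid (h : 3 ≤ m) (i : Fin m) :
      ATLRel q m (ι K i * ι K (csucc i) * ι K i) (ι K (csucc i) * ι K i * ι K (csucc i))
  | vrel (h : 3 ≤ m) (i : Fin m) :
      ATLRel q m (ι K i * ι K (csucc i) * ι K i + ι K i * ι K (csucc i) + ι K (csucc i) * ι K i
        + ι K i + ι K (csucc i) + 1) 0

/-- The affine Temperley–Lieb algebra `TLhat_m(q)` of type `Ã`. -/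
abbrev ATL (K : Type*) [CommRing K] (q : K) (m : ℕ) : Type _ := RingQuot (ATLRel q m)

/-- The generators of `TLhat_m(q)`. -/
noncomputable def g {K : Type*} [CommRing K] (q : K) (m : ℕ) (i : Fin m) : ATL K q m :=
  RingQuot.mkAlgHom K (ATLRel q m) (ι K i)

/-- The defining relations of the type `A` Temperley–Lieb algebra `TL_n(q)` with `n`
generators (`g_{σ_i}` has index `i - 1`). -/
inductive TLARel {K : Type*} [CommRing K] (q : K) (n : ℕ) :
    FreeAlgebra K (Fin n) → FreeAlgebra K (Fin n) → Prop
  | quad (i : Fin n) :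
      TLARel q n (ι K i * ι K i) ((q - 1) • ι K i + algebraMap K _ q)
  | comm (i j : Fin n) (h : i.val + 2 ≤ j.val ∨ j.val + 2 ≤ i.val) :
      TLARel q n (ι K i * ι K j) (ι K j * ι K i)
  | braid (i j : Fin n) (h : j.val = i.val + 1) :
      TLARel q n (ι K i * ι K j * ι K i) (ι K j * ι K i * ι K j)
  | vrel (i j : Fin n) (h : j.val = i.val + 1) :
      TLARel q n (ι K i * ι K j * ι K i + ι K i * ι K j + ι K j * ι K i
        + ι K i + ι K j + 1) 0

/-- The type `A` Temperley–Lieb algebra `TL_n(q)`. -/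
abbrev TLA (K : Type*) [CommRing K] (q : K) (n : ℕ) : Type _ := RingQuot (TLARel q n)

/-- The generators of `TL_n(q)`. -/
noncomputable def gA {K : Type*} [CommRing K] (q : K) (n : ℕ) (i : Fin n) : TLA K q n :=
  RingQuot.mkAlgHom K (TLARel q n) (ι K i)

/-- The formal inverse `q⁻¹·(x − (q−1))` of an element satisfying `x² = (q−1)x + q`. -/
noncomputable def qinv {K : Type*} [CommRing K] (q : K) {A : Type*} [Ring A] [Algebra K A]
    (x : A) : A :=
  Ring.inverse q • (x - algebraMap K A (q - 1))

/-- A trace on a `K`-algebra: a `K`-linear form vanishing on commutators. -/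
def IsTrace {K : Type*} [CommRing K] {A : Type*} [Ring A] [Algebra K A]
    (τ : A →ₗ[K] K) : Prop :=
  ∀ x y : A, τ (x * y) = τ (y * x)

/-- The element `G = g_{σ_n}⋯g_{σ_1}·g_{a_{n+1}}` of `TLhat_{n+1}(q)`. -/
noncomputable def bigG {K : Type*} [CommRing K] (q : K) (n : ℕ) : ATL K q (n + 1) :=
  (List.ofFn fun j : Fin n => g q (n + 1) ⟨n - 1 - j.val, by omega⟩).prod *
    g q (n + 1) (Fin.last n)

/-- The inverse `G⁻¹ = g_{a_{n+1}}⁻¹·g_{σ_1}⁻¹⋯g_{σ_n}⁻¹` of `bigG`. -/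
noncomputable def bigGinv {K : Type*} [CommRing K] (q : K) (n : ℕ) : ATL K q (n + 1) :=
  qinv q (g q (n + 1) (Fin.last n)) *
    (List.ofFn fun j : Fin n => qinv q (g q (n + 1) j.castSucc)).prod

end AffineTL

namespace AffineTL

/-- `F` is the canonical homomorphism `F_m : TLhat_m(q) → TLhat_{m+1}(q)`:
`t_{σ_i} ↦ g_{σ_i}` for `1 ≤ i ≤ m−1` and `t_{a_m} ↦ g_{σ_m}·g_{a_{m+1}}·g_{σ_m}⁻¹`. -/
def isF {K : Type*} [CommRing K] (q : K) (m : ℕ) (hm : 2 ≤ m)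
    (F : ATL K q m →ₐ[K] ATL K q (m + 1)) : Prop :=
  (∀ i : ℕ, ∀ hi : i < m - 1,
      F (g q m ⟨i, by omega⟩) = g q (m + 1) ⟨i, by omega⟩) ∧
  F (g q m ⟨m - 1, by omega⟩) =
    g q (m + 1) ⟨m - 1, by omega⟩ * g q (m + 1) ⟨m, by omega⟩ *
      qinv q (g q (m + 1) ⟨m - 1, by omega⟩)

end AffineTL

namespace AffineTLAux

open AffineTL FreeAlgebra

section Generic

variable {M : Type*} [Monoid M]

/-- Descending product `y k * (y (k-1) * (⋯ * y 0))`. -/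
def D (y : ℕ → M) : ℕ → M
  | 0 => y 0
  | k + 1 => y (k + 1) * D y k

/-- Ascending product `(z 0 * z 1) * ⋯ * z k`. -/
def E (z : ℕ → M) : ℕ → M
  | 0 => z 0
  | k + 1 => E z k * z (k + 1)

theorem ofFn_desc (y : ℕ → M) : ∀ k : ℕ,
    (List.ofFn fun j : Fin (k + 1) => y (k - j.val)).prod = D y k
  | 0 => by simp [D]
  | k + 1 => by
    rw [List.ofFn_succ, List.prod_cons]
    have h : (fun j : Fin (k + 1) => y (k + 1 - (Fin.succ j).val))
        = fun j : Fin (k + 1) => y (k - j.val) := by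
      funext j
      congr 1
      simp [Fin.val_succ]
    rw [h, ofFn_desc y k]
    rfl

theorem ofFn_asc (z : ℕ → M) : ∀ k : ℕ,
    (List.ofFn fun j : Fin (k + 1) => z j.val).prod = E z k
  | 0 => by simp [E]
  | k + 1 => by
    rw [List.ofFn_succ', List.concat_eq_append, List.prod_append]
    have h : (fun j : Fin (k + 1) => z (Fin.castSucc j).val)
        = fun j : Fin (k + 1) => z j.val := rfl
    rw [show (fun j : Fin (k + 1) => z ((Fin.castSucc j) : Fin (k+2)).val)
        = fun j : Fin (k + 1) => z j.val from h]
    rw [ofFn_asc z k]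
    simp [E]

theorem D_comm (y : ℕ → M) (w : M) :
    ∀ k : ℕ, (∀ l, l ≤ k → y l * w = w * y l) → D y k * w = w * D y k
  | 0, h => h 0 le_rfl
  | k + 1, h => by
    show y (k + 1) * D y k * w = w * (y (k + 1) * D y k)
    rw [mul_assoc, D_comm y w k (fun l hl => h l (by omega)), ← mul_assoc,
      h (k + 1) le_rfl, mul_assoc]

theorem D_E (y z : ℕ → M) :
    ∀ k : ℕ, (∀ l, l ≤ k → y l * z l = 1 ∧ z l * y l = 1) →
      D y k * E z k = 1 ∧ E z k * D y k = 1
  | 0, h => h 0 le_rfl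
  | k + 1, h => by
    have ih := D_E y z k (fun l hl => h l (by omega))
    constructor
    · show y (k + 1) * D y k * (E z k * z (k + 1)) = 1
      rw [mul_assoc, ← mul_assoc (D y k), ih.1, one_mul, (h (k + 1) le_rfl).1]
    · show E z k * z (k + 1) * (y (k + 1) * D y k) = 1
      rw [mul_assoc, ← mul_assoc (z (k + 1)), (h (k + 1) le_rfl).2, one_mul, ih.2]

theorem D_shift (y : ℕ → M) (N : ℕ)
    (hb : ∀ i, i + 1 ≤ N → y i * y (i + 1) * y i = y (i + 1) * y i * y (i + 1))
    (hc : ∀ i j, i + 2 ≤ j → j ≤ N → y i * y j = y j * y i) :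
    ∀ k, k ≤ N → ∀ i, i < k → D y k * y (i + 1) = y i * D y k := by
  intro k
  induction k with
  | zero => intro _ i hi; omega
  | succ k ih =>
    intro hk i hi
    rcases Nat.lt_or_ge i k with h | h
    · -- i < k
      show y (k + 1) * D y k * y (i + 1) = y i * (y (k + 1) * D y k)
      rw [mul_assoc, ih (by omega) i h, ← mul_assoc,
        ← hc i (k + 1) (by omega) hk, mul_assoc]
    · -- i = k
      have hik : i = k := by omega
      subst hik
      cases i with
      | zero =>
        have hb0 : y 0 * y 1 * y 0 = y 1 * y 0 * y 1 := hb 0 (by omega)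
        show y 1 * y 0 * y 1 = y 0 * (y 1 * y 0)
        rw [← hb0, mul_assoc]
      | succ k' =>
        have hcomm : D y k' * y (k' + 2) = y (k' + 2) * D y k' :=
          D_comm y _ k' (fun l hl => hc l (k' + 2) (by omega) (by omega))
        show y (k' + 2) * (y (k' + 1) * D y k') * y (k' + 2)
          = y (k' + 1) * (y (k' + 2) * (y (k' + 1) * D y k'))
        calc y (k' + 2) * (y (k' + 1) * D y k') * y (k' + 2)
            = y (k' + 2) * y (k' + 1) * (D y k' * y (k' + 2)) := by
              simp only [mul_assoc]
          _ = y (k' + 2) * y (k' + 1) * y (k' + 2) * D y k' := by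
              rw [hcomm, ← mul_assoc]
          _ = y (k' + 1) * y (k' + 2) * y (k' + 1) * D y k' := by
              have hbb : y (k' + 1) * y (k' + 2) * y (k' + 1)
                  = y (k' + 2) * y (k' + 1) * y (k' + 2) := hb (k' + 1) (by omega)
              rw [← hbb]
          _ = y (k' + 1) * (y (k' + 2) * (y (k' + 1) * D y k')) := by
              simp only [mul_assoc]

theorem D_zero (y : ℕ → M) (w : M) (N : ℕ)
    (hb0 : y 0 * w * y 0 = w * y 0 * w)
    (hcw : ∀ l, 1 ≤ l → l ≤ N → y l * w = w * y l) :
    ∀ k, k ≤ N → D y k * (w * y 0) = w * (D y k * w) := by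
  intro k
  induction k with
  | zero =>
    intro _
    show y 0 * (w * y 0) = w * (y 0 * w)
    simp only [← mul_assoc]; exact hb0
  | succ k ih =>
    intro hk
    show y (k + 1) * D y k * (w * y 0) = w * (y (k + 1) * D y k * w)
    rw [mul_assoc (y (k+1)), ih (by omega), ← mul_assoc, hcw (k + 1) (by omega) hk,
      mul_assoc w, ← mul_assoc (y (k+1))]

end Generic

section Concrete

variable {K : Type*} [CommRing K]

/-- ℕ-indexed generators of `ATL K q (n+1)`. -/
noncomputable def Y (q : K) (n : ℕ) (i : ℕ) : ATL K q (n + 1) :=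
  g q (n + 1) ⟨i % (n + 1), Nat.mod_lt _ (Nat.succ_pos n)⟩

theorem Y_eq (q : K) (n : ℕ) {i : ℕ} (h : i < n + 1) :
    Y q n i = g q (n + 1) ⟨i, h⟩ := by
  unfold Y
  congr 1
  exact Fin.ext (Nat.mod_eq_of_lt h)

theorem Y_congr (q : K) (n : ℕ) {i j : ℕ} (h : i % (n + 1) = j % (n + 1)) :
    Y q n i = Y q n j := by
  unfold Y
  congr 1
  exact Fin.ext h

theorem quadY (q : K) (p i : ℕ) :
    Y q (p + 2) i * Y q (p + 2) i = (q - 1) • Y q (p + 2) i + algebraMap K _ q := by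
  have h := RingQuot.mkAlgHom_rel K
    (ATLRel.quad (q := q) (m := p + 3) (by omega)
      ⟨i % (p + 3), Nat.mod_lt _ (Nat.succ_pos (p + 2))⟩)
  simp only [map_mul, map_add, map_smul, AlgHom.commutes] at h
  exact h

theorem braidY (q : K) (p i : ℕ) :
    Y q (p + 2) i * Y q (p + 2) (i + 1) * Y q (p + 2) i
      = Y q (p + 2) (i + 1) * Y q (p + 2) i * Y q (p + 2) (i + 1) := by
  set i' : Fin (p + 3) := ⟨i % (p + 3), Nat.mod_lt _ (Nat.succ_pos (p + 2))⟩ with hi'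
  have hcs : csucc i' = ⟨(i + 1) % (p + 3), Nat.mod_lt _ (Nat.succ_pos (p + 2))⟩ :=
    Fin.ext (Nat.mod_add_mod i (p + 3) 1)
  have h := RingQuot.mkAlgHom_rel K (ATLRel.braid (q := q) (m := p + 3) (by omega) i')
  rw [hcs] at h
  simp only [map_mul] at h
  exact h

theorem commY (q : K) (p : ℕ) {i j : ℕ} (hij : i + 2 ≤ j) (hj : j ≤ p + 2)
    (h0 : ¬(i = 0 ∧ j = p + 2)) :
    Y q (p + 2) i * Y q (p + 2) j = Y q (p + 2) j * Y q (p + 2) i := by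
  have hi' : i % (p + 3) = i := Nat.mod_eq_of_lt (by omega)
  have hj' : j % (p + 3) = j := Nat.mod_eq_of_lt (by omega)
  set iF : Fin (p + 3) := ⟨i % (p + 3), Nat.mod_lt _ (Nat.succ_pos (p + 2))⟩ with hiF
  set jF : Fin (p + 3) := ⟨j % (p + 3), Nat.mod_lt _ (Nat.succ_pos (p + 2))⟩ with hjF
  have h1 : iF ≠ jF := by
    simp only [hiF, hjF, Fin.ne_iff_vne, hi', hj']
    omega
  have h2 : jF ≠ csucc iF := by
    have : (csucc iF).val = i + 1 := by
      show (i % (p + 3) + 1) % (p + 3) = i + 1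
      rw [hi']
      exact Nat.mod_eq_of_lt (by omega)
    simp only [Fin.ne_iff_vne, hjF, hj', this]
    omega
  have h3 : iF ≠ csucc jF := by
    have hv : (csucc jF).val = (j + 1) % (p + 3) := by
      show (j % (p + 3) + 1) % (p + 3) = (j + 1) % (p + 3)
      rw [hj']
    simp only [Fin.ne_iff_vne, hiF, hi', hv]
    rcases Nat.lt_or_ge j (p + 2) with h | h
    · rw [Nat.mod_eq_of_lt (by omega)]
      omega
    · have hj2 : j = p + 2 := by omega
      rw [hj2, Nat.mod_self]
      omega
  have h := RingQuot.mkAlgHom_rel K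
    (ATLRel.comm (q := q) (m := p + 3) (by omega) iF jF h1 h2 h3)
  simp only [map_mul] at h
  exact h

theorem qinv_mul_self (q : K) {A : Type*} [Ring A] [Algebra K A] (hq : IsUnit q) (x : A)
    (hx : x * x = (q - 1) • x + algebraMap K A q) :
    qinv q x * x = 1 := by
  have h : (x - algebraMap K A (q - 1)) * x = algebraMap K A q := by
    rw [sub_mul, ← Algebra.smul_def, hx, add_sub_cancel_left]
  rw [qinv, smul_mul_assoc, h, Algebra.smul_def, ← map_mul,
    Ring.inverse_mul_cancel q hq, map_one]

theorem self_mul_qinv (q : K) {A : Type*} [Ring A] [Algebra K A] (hq : IsUnit q) (x : A)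
    (hx : x * x = (q - 1) • x + algebraMap K A q) :
    x * qinv q x = 1 := by
  have h : x * (x - algebraMap K A (q - 1)) = algebraMap K A q := by
    rw [mul_sub, ← Algebra.commutes, ← Algebra.smul_def, hx, add_sub_cancel_left]
  rw [qinv, mul_smul_comm, h, Algebra.smul_def, ← map_mul,
    Ring.inverse_mul_cancel q hq, map_one]

theorem bigG_eq (q : K) (p : ℕ) :
    bigG q (p + 2) = D (Y q (p + 2)) (p + 1) * Y q (p + 2) (p + 2) := by
  unfold bigG
  have h1 : (fun j : Fin (p + 2) => g q (p + 3) ⟨p + 2 - 1 - j.val, by omega⟩)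
      = fun j : Fin (p + 2) => Y q (p + 2) (p + 1 - j.val) := by
    funext j
    exact (Y_eq q (p + 2) (by omega)).symm
  rw [h1, ofFn_desc]
  congr 1
  exact (Y_eq q (p + 2) (by omega)).symm

theorem bigGinv_eq (q : K) (p : ℕ) :
    bigGinv q (p + 2) = qinv q (Y q (p + 2) (p + 2)) *
      E (fun i => qinv q (Y q (p + 2) i)) (p + 1) := by
  unfold bigGinv
  have h1 : (fun j : Fin (p + 2) => qinv q (g q (p + 3) j.castSucc))
      = fun j : Fin (p + 2) => qinv q (Y q (p + 2) j.val) := by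
    funext j
    have e : (j.castSucc : Fin (p + 3)) = ⟨j.val, by omega⟩ := Fin.ext rfl
    rw [e, ← Y_eq q (p + 2) (by omega : (j : ℕ) < p + 3)]
  rw [h1]
  rw [(ofFn_asc (fun i => qinv q (Y q (p + 2) i)) (p + 1) :
    (List.ofFn fun j : Fin (p + 2) => qinv q (Y q (p + 2) j.val)).prod = _)]
  rw [(show g q (p + 2 + 1) (Fin.last (p + 2)) = Y q (p + 2) (p + 2) from
    (Y_eq q (p + 2) (by omega)).symm)]

theorem Ypair (q : K) (p : ℕ) (hq : IsUnit q) (l : ℕ) :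
    Y q (p + 2) l * qinv q (Y q (p + 2) l) = 1 ∧
      qinv q (Y q (p + 2) l) * Y q (p + 2) l = 1 :=
  ⟨self_mul_qinv q hq _ (quadY q p l), qinv_mul_self q hq _ (quadY q p l)⟩

theorem bigG_mul_bigGinv (q : K) (p : ℕ) (hq : IsUnit q) :
    bigG q (p + 2) * bigGinv q (p + 2) = 1 := by
  rw [bigG_eq, bigGinv_eq]
  have hDE := D_E (Y q (p + 2)) (fun i => qinv q (Y q (p + 2) i)) (p + 1)
    (fun l _ => Ypair q p hq l)
  rw [mul_assoc, ← mul_assoc (Y q (p + 2) (p + 2)), (Ypair q p hq (p + 2)).1, one_mul, hDE.1]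

theorem bigGinv_mul_bigG (q : K) (p : ℕ) (hq : IsUnit q) :
    bigGinv q (p + 2) * bigG q (p + 2) = 1 := by
  rw [bigG_eq, bigGinv_eq]
  have hDE := D_E (Y q (p + 2)) (fun i => qinv q (Y q (p + 2) i)) (p + 1)
    (fun l _ => Ypair q p hq l)
  rw [mul_assoc, ← mul_assoc (E _ _), hDE.2, one_mul, (Ypair q p hq (p + 2)).2]

theorem shiftD (q : K) (p : ℕ) :
    ∀ k, k ≤ p + 1 → ∀ i, i < k →
      D (Y q (p + 2)) k * Y q (p + 2) (i + 1) = Y q (p + 2) i * D (Y q (p + 2)) k :=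
  D_shift (Y q (p + 2)) (p + 1) (fun i _ => braidY q p i)
    (fun i j hij hj => commY q p hij (by omega) (by omega))

theorem L1 (q : K) (p : ℕ) {i : ℕ} (hi : i + 1 ≤ p) :
    bigG q (p + 2) * Y q (p + 2) (i + 1) = Y q (p + 2) i * bigG q (p + 2) := by
  rw [bigG_eq, mul_assoc,
    (commY q p (by omega : i + 1 + 2 ≤ p + 2) le_rfl (by omega)).symm,
    ← mul_assoc, shiftD q p (p + 1) le_rfl i (by omega), mul_assoc]

theorem L2 (q : K) (p : ℕ) (hq : IsUnit q) :
    bigG q (p + 2) * Y q (p + 2) 0 =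
      Y q (p + 2) (p + 1) * Y q (p + 2) (p + 2) * qinv q (Y q (p + 2) (p + 1)) *
        bigG q (p + 2) := by
  have hY0 : Y q (p + 2) (p + 3) = Y q (p + 2) 0 := by
    apply Y_congr
    rw [Nat.mod_self, Nat.zero_mod]
  have hb0 : Y q (p + 2) 0 * Y q (p + 2) (p + 2) * Y q (p + 2) 0
      = Y q (p + 2) (p + 2) * Y q (p + 2) 0 * Y q (p + 2) (p + 2) := by
    have h := braidY q p (p + 2)
    rw [hY0] at h
    exact h.symm
  have hzero : D (Y q (p + 2)) p * (Y q (p + 2) (p + 2) * Y q (p + 2) 0)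
      = Y q (p + 2) (p + 2) * (D (Y q (p + 2)) p * Y q (p + 2) (p + 2)) :=
    D_zero (Y q (p + 2)) (Y q (p + 2) (p + 2)) p hb0
      (fun l hl1 hl2 => commY q p (by omega) le_rfl (by omega)) p le_rfl
  have hD : D (Y q (p + 2)) (p + 1) = Y q (p + 2) (p + 1) * D (Y q (p + 2)) p := rfl
  rw [bigG_eq, hD]
  simp only [mul_assoc]
  rw [hzero]
  rw [← mul_assoc (qinv q (Y q (p + 2) (p + 1))) (Y q (p + 2) (p + 1)),
    (Ypair q p hq (p + 1)).2, one_mul]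

theorem L3 (q : K) (p : ℕ) (hq : IsUnit q) :
    bigG q (p + 2) * (Y q (p + 2) (p + 1) * Y q (p + 2) (p + 2) *
        qinv q (Y q (p + 2) (p + 1))) = Y q (p + 2) p * bigG q (p + 2) := by
  have hbr : Y q (p + 2) (p + 2) * (Y q (p + 2) (p + 1) * Y q (p + 2) (p + 2))
      = Y q (p + 2) (p + 1) * (Y q (p + 2) (p + 2) * Y q (p + 2) (p + 1)) := by
    have h : Y q (p + 2) (p + 1) * Y q (p + 2) (p + 2) * Y q (p + 2) (p + 1)
        = Y q (p + 2) (p + 2) * Y q (p + 2) (p + 1) * Y q (p + 2) (p + 2) :=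
      braidY q p (p + 1)
    simp only [mul_assoc] at h
    exact h.symm
  have hsh : D (Y q (p + 2)) (p + 1) * Y q (p + 2) (p + 1)
      = Y q (p + 2) p * D (Y q (p + 2)) (p + 1) :=
    shiftD q p (p + 1) le_rfl p (by omega)
  rw [bigG_eq]
  calc D (Y q (p + 2)) (p + 1) * Y q (p + 2) (p + 2) *
        (Y q (p + 2) (p + 1) * Y q (p + 2) (p + 2) * qinv q (Y q (p + 2) (p + 1)))
      = D (Y q (p + 2)) (p + 1) * (Y q (p + 2) (p + 2) *
          (Y q (p + 2) (p + 1) * Y q (p + 2) (p + 2))) * qinv q (Y q (p + 2) (p + 1)) := by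
        simp only [mul_assoc]
    _ = D (Y q (p + 2)) (p + 1) * (Y q (p + 2) (p + 1) *
          (Y q (p + 2) (p + 2) * Y q (p + 2) (p + 1))) * qinv q (Y q (p + 2) (p + 1)) := by
        rw [hbr]
    _ = D (Y q (p + 2)) (p + 1) * Y q (p + 2) (p + 1) *
          (Y q (p + 2) (p + 2) * (Y q (p + 2) (p + 1) * qinv q (Y q (p + 2) (p + 1)))) := by
        simp only [mul_assoc]
    _ = D (Y q (p + 2)) (p + 1) * Y q (p + 2) (p + 1) * Y q (p + 2) (p + 2) := by
        rw [(Ypair q p hq (p + 1)).1, mul_one]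
    _ = Y q (p + 2) p * D (Y q (p + 2)) (p + 1) * Y q (p + 2) (p + 2) := by rw [hsh]
    _ = Y q (p + 2) p * (D (Y q (p + 2)) (p + 1) * Y q (p + 2) (p + 2)) := by
        rw [mul_assoc]

/-- Conjugation by an invertible element, as an algebra homomorphism. -/
noncomputable def conjAlgHom {A : Type*} [Ring A] [Algebra K A]
    (u v : A) (huv : u * v = 1) (hvu : v * u = 1) : A →ₐ[K] A where
  toFun x := u * x * v
  map_one' := by
    show u * 1 * v = 1
    rw [mul_one, huv]
  map_mul' x y := by
    show u * (x * y) * v = u * x * v * (u * y * v)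
    have h : u * x * v * (u * y * v) = u * (x * ((v * u) * (y * v))) := by
      simp only [mul_assoc]
    rw [h, hvu, one_mul]
    simp only [mul_assoc]
  map_zero' := by
    show u * 0 * v = 0
    rw [mul_zero, zero_mul]
  map_add' x y := by
    show u * (x + y) * v = u * x * v + u * y * v
    rw [mul_add, add_mul]
  commutes' r := by
    show u * algebraMap K A r * v = algebraMap K A r
    rw [← Algebra.commutes r u, mul_assoc, huv, mul_one]

theorem conjAlgHom_apply {A : Type*} [Ring A] [Algebra K A]
    (u v : A) (huv : u * v = 1) (hvu : v * u = 1) (x : A) :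
    conjAlgHom (K := K) u v huv hvu x = u * x * v := rfl

end Concrete


end AffineTLAux

open AffineTL in
/-- with `G = g_{σ_n}⋯g_{σ_1}·g_{a_{n+1}}`, conjugation by `G` acts on the image
of `F_n` as the inverse Dynkin automorphism: `G·F_n(x)·G⁻¹ = F_n(ψ_n⁻¹(x))`; in particular,
if `ψ_n(x) = y` then `F_n(x)` and `F_n(y)` are conjugate by a power of `G`. -/
theorem statement2 {K : Type*} [CommRing K] [IsDomain K] [CharZero K]
    (q sq : K) (hsq : sq * sq = q) (hq : IsUnit q) (hq1 : IsUnit (q + 1))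
    (n : ℕ) (hn : 2 ≤ n)
    (F : ATL K q n →ₐ[K] ATL K q (n + 1)) (hF : isF q n hn F)
    (ψ : ATL K q n ≃ₐ[K] ATL K q n)
    (hψ : ∀ i : Fin n, ψ (g q n i) = g q n (csucc i)) :
    (∀ x : ATL K q n,
      bigG q n * F x * bigGinv q n = F (ψ.symm x)) ∧
    (∀ x y : ATL K q n, ψ x = y →
      ∃ d : ℕ, (bigG q n) ^ d * F x * (bigGinv q n) ^ d = F y ∨
        (bigG q n) ^ d * F y * (bigGinv q n) ^ d = F x) := by
  obtain ⟨p, rfl⟩ : ∃ p, n = p + 2 := ⟨n - 2, by omega⟩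
  have hGGi := AffineTLAux.bigG_mul_bigGinv q p hq
  have hGiG := AffineTLAux.bigGinv_mul_bigG q p hq
  have main : ∀ x : ATL K q (p + 2),
      bigG q (p + 2) * F x * bigGinv q (p + 2) = F (ψ.symm x) := by
    have hsymm : ∀ i₀ : Fin (p + 2), ψ.symm (g q (p + 2) (csucc i₀)) = g q (p + 2) i₀ := by
      intro i₀
      rw [← hψ i₀, AlgEquiv.symm_apply_apply]
    have hcomp : (AffineTLAux.conjAlgHom (K := K) (bigG q (p + 2)) (bigGinv q (p + 2))
        hGGi hGiG).comp F = F.comp ψ.symm.toAlgHom := by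
      apply RingQuot.ringQuot_ext'
      apply FreeAlgebra.hom_ext
      funext i
      simp only [Function.comp_apply, AlgHom.comp_apply, AlgEquiv.toAlgHom_eq_coe,
        AlgHom.coe_coe]
      show bigG q (p + 2) * F (g q (p + 2) i) * bigGinv q (p + 2)
        = F (ψ.symm (g q (p + 2) i))
      obtain ⟨j, hj⟩ := i
      rcases Nat.lt_or_ge j 1 with h0 | h1
      · -- j = 0
        have hj0 : j = 0 := by omega
        subst hj0
        have e1 : (⟨0, hj⟩ : Fin (p + 2)) = csucc ⟨p + 1, by omega⟩ := by
          apply Fin.ext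
          show 0 = (p + 1 + 1) % (p + 2)
          rw [Nat.mod_self]
        have hpsi : ψ.symm (g q (p + 2) ⟨0, hj⟩) = g q (p + 2) ⟨p + 1, by omega⟩ := by
          rw [e1]; exact hsymm _
        rw [hpsi]
        have hF0 : F (g q (p + 2) ⟨0, hj⟩) = g q (p + 3) ⟨0, by omega⟩ :=
          hF.1 0 (by omega)
        have hF2 : F (g q (p + 2) ⟨p + 1, by omega⟩) =
            g q (p + 3) ⟨p + 1, by omega⟩ * g q (p + 3) ⟨p + 2, by omega⟩ *
              qinv q (g q (p + 3) ⟨p + 1, by omega⟩) := hF.2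
        rw [hF0, hF2, ← AffineTLAux.Y_eq q (p + 2) (by omega : 0 < p + 3),
          ← AffineTLAux.Y_eq q (p + 2) (by omega : p + 1 < p + 3),
          ← AffineTLAux.Y_eq q (p + 2) (by omega : p + 2 < p + 3),
          AffineTLAux.L2 q p hq,
          mul_assoc (AffineTLAux.Y q (p + 2) (p + 1) * AffineTLAux.Y q (p + 2) (p + 2) *
            qinv q (AffineTLAux.Y q (p + 2) (p + 1))) (bigG q (p + 2)) (bigGinv q (p + 2)),
          hGGi, mul_one]
      rcases Nat.lt_or_ge j (p + 1) with h2 | h2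
      · -- 1 ≤ j ≤ p
        have e1 : (⟨j, hj⟩ : Fin (p + 2)) = csucc ⟨j - 1, by omega⟩ := by
          apply Fin.ext
          show j = (j - 1 + 1) % (p + 2)
          rw [show j - 1 + 1 = j from by omega, Nat.mod_eq_of_lt hj]
        have hpsi : ψ.symm (g q (p + 2) ⟨j, hj⟩) = g q (p + 2) ⟨j - 1, by omega⟩ := by
          rw [e1]; exact hsymm _
        rw [hpsi]
        have hFj : F (g q (p + 2) ⟨j, hj⟩) = g q (p + 3) ⟨j, by omega⟩ :=
          hF.1 j (by omega)
        have hFj' : F (g q (p + 2) ⟨j - 1, by omega⟩) = g q (p + 3) ⟨j - 1, by omega⟩ :=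
          hF.1 (j - 1) (by omega)
        rw [hFj, hFj', ← AffineTLAux.Y_eq q (p + 2) (by omega : j < p + 3),
          ← AffineTLAux.Y_eq q (p + 2) (by omega : j - 1 < p + 3)]
        have hL := AffineTLAux.L1 q p (i := j - 1) (by omega)
        rw [show j - 1 + 1 = j from by omega] at hL
        rw [hL, mul_assoc (AffineTLAux.Y q (p + 2) (j - 1)) (bigG q (p + 2))
          (bigGinv q (p + 2)), hGGi, mul_one]
      · -- j = p + 1
        have hjp : j = p + 1 := by omega
        subst hjp
        have e1 : (⟨p + 1, hj⟩ : Fin (p + 2)) = csucc ⟨p, by omega⟩ := by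
          apply Fin.ext
          show p + 1 = (p + 1) % (p + 2)
          rw [Nat.mod_eq_of_lt (by omega)]
        have hpsi : ψ.symm (g q (p + 2) ⟨p + 1, hj⟩) = g q (p + 2) ⟨p, by omega⟩ := by
          rw [e1]; exact hsymm _
        rw [hpsi]
        have hF2 : F (g q (p + 2) ⟨p + 1, hj⟩) =
            g q (p + 3) ⟨p + 1, by omega⟩ * g q (p + 3) ⟨p + 2, by omega⟩ *
              qinv q (g q (p + 3) ⟨p + 1, by omega⟩) := hF.2
        have hFp : F (g q (p + 2) ⟨p, by omega⟩) = g q (p + 3) ⟨p, by omega⟩ :=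
          hF.1 p (by omega)
        rw [hF2, hFp, ← AffineTLAux.Y_eq q (p + 2) (by omega : p + 1 < p + 3),
          ← AffineTLAux.Y_eq q (p + 2) (by omega : p + 2 < p + 3),
          ← AffineTLAux.Y_eq q (p + 2) (by omega : p < p + 3),
          AffineTLAux.L3 q p hq,
          mul_assoc (AffineTLAux.Y q (p + 2) p) (bigG q (p + 2)) (bigGinv q (p + 2)),
          hGGi, mul_one]
    intro x
    have h := AlgHom.congr_fun hcomp x
    simp only [AlgHom.comp_apply, AlgEquiv.toAlgHom_eq_coe, AlgHom.coe_coe,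
      AffineTLAux.conjAlgHom_apply] at h
    exact h
  refine ⟨main, ?_⟩
  intro x y hxy
  refine ⟨1, Or.inr ?_⟩
  rw [pow_one, pow_one, main y, ← hxy, AlgEquiv.symm_apply_apply]
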